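/- Let β = (log₂ 3 − 1)/2. For all real numbers x, y with x ≥ 2 and y ≥ 2^(β·x), one has 2^(2x²+x+1)·f(y) ≤ f(2^x·y). -/

import Mathlib

/-!
Work in base 2. With `L = log₂ 3` and `a = log₂ (2y+1)` one has `f y = 2 ^ (a (2a/L + 1))`, and
this exponent is increasing in `a ≥ 0`. Since `log₂ (2y+1) ≤ L + log₂ y` and
`log₂ (2·2ˣy+1) ≥ x + 1 + log₂ y`, the claim reduces to a polynomial inequality in `x`, `L` and
`s = log₂ y`, which follows from `2s ≥ (L-1)x`, `x ≥ 2` and `L ≤ 8/5` (i.e. `3⁵ ≤ 2⁸`).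
-/

/-- The function `f(x) = (2x+1)^(2·log₃(2x+1)+1)`. -/
noncomputable def f (x : ℝ) : ℝ :=
  (2 * x + 1) ^ (2 * Real.logb 3 (2 * x + 1) + 1)

open Real

noncomputable def fExponent (L a : ℝ) : ℝ := a * (2 * a / L + 1)

lemma rpow_two_mul_logb_three_add_one {b z : ℝ} (hb : 0 < b) (hb1 : b ≠ 1) (hz : 0 < z) :
    z ^ (2 * logb 3 z + 1) = b ^ fExponent (logb b 3) (logb b z) := by
  have hlogb : logb 3 z = logb b z / logb b 3 := by
    have hlog3 := log_pos (by norm_num : (1:ℝ) < 3)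
    have hlogb0 := log_ne_zero_of_pos_of_ne_one hb hb1
    unfold logb; field_simp
  rw [hlogb, fExponent, rpow_mul hb.le, rpow_logb hb hb1 hz, mul_div_assoc]

lemma fExponent_le_fExponent {L u v : ℝ} (hL : 0 < L) (hu : 0 ≤ u) (huv : u ≤ v) :
    fExponent L u ≤ fExponent L v := by
  have hdiff : fExponent L v - fExponent L u = (v - u) * (1 + 2 * (u + v) / L) := by
    unfold fExponent; ring
  have huv' : 0 ≤ u + v := by linarith
  have : 0 ≤ (v - u) * (1 + 2 * (u + v) / L) := mul_nonneg (sub_nonneg.2 huv) (by positivity)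
  linarith

lemma add_fExponent_le_fExponent {L x s : ℝ} (hL0 : 0 < L) (hL : L ≤ 8 / 5) (hx : 2 ≤ x)
    (hs : (L - 1) * x ≤ 2 * s) :
    2 * x ^ 2 + x + 1 + fExponent L (L + s) ≤ fExponent L (x + 1 + s) := by
  set N := (x + 1 - L) * (L + 2 * (x + 1 + L + 2 * s)) - L * (2 * x ^ 2 + x + 1)
  have hdiff : fExponent L (x + 1 + s) - fExponent L (L + s) - (2 * x ^ 2 + x + 1) = N / L := by
    unfold fExponent; field_simp; ring
  -- By `hs`, `N ≥ (x - 2)(4L + 2 - 2L²) + (8L + 6 - 7L²)`; both terms are `≥ 0` if `0 < L ≤ 8/5`.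
  have hN : 0 ≤ N := by
    have hLL : L * L ≤ 8 / 5 * L := by nlinarith
    nlinarith [mul_le_mul_of_nonneg_left hs (by linarith : 0 ≤ x + 1 - L),
      mul_nonneg (by linarith : 0 ≤ x - 2) (by linarith : 0 ≤ 4 * L + 2 - 2 * L ^ 2)]
  linarith [div_nonneg hN hL0.le]

lemma one_le_logb_two_three : 1 ≤ logb 2 3 := by
  rw [le_logb_iff_rpow_le (by norm_num) (by norm_num)]; norm_num

lemma logb_two_three_le : logb 2 3 ≤ 8 / 5 := by
  have h := logb_le_logb_of_le (b := 2) (by norm_num) (by norm_num)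
    (by norm_num : (3:ℝ) ^ 5 ≤ 2 ^ 8)
  rw [logb_pow, logb_pow, logb_self_eq_one (by norm_num)] at h
  push_cast at h
  linarith

lemma logb_two_mul_add_one_le {b y : ℝ} (hb : 1 < b) (hy : 1 ≤ y) :
    logb b (2 * y + 1) ≤ logb b 3 + logb b y := by
  rw [← logb_mul (by norm_num) (by positivity)]
  exact logb_le_logb_of_le hb (by positivity) (by linarith)

lemma add_one_add_logb_two_le {x y : ℝ} (hy : 0 < y) :
    x + 1 + logb 2 y ≤ logb 2 (2 * (2 ^ x * y) + 1) := by
  rw [le_logb_iff_rpow_le one_lt_two (by positivity), rpow_add two_pos, rpow_add two_pos,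
    rpow_one, rpow_logb two_pos (by norm_num) hy]
  nlinarith [rpow_pos_of_pos two_pos x]

/-- **Lemma A5:** with `β = (log₂ 3 − 1)/2`, for all reals `x ≥ 2` and `y ≥ 2^(β·x)`,
`2^(2x²+x+1)·f(y) ≤ f(2^x·y)`. -/
theorem stmt17 : ∀ x y : ℝ, 2 ≤ x → (2 : ℝ) ^ (((Real.logb 2 3 - 1) / 2) * x) ≤ y →
    (2 : ℝ) ^ (2 * x ^ 2 + x + 1) * f y ≤ f ((2 : ℝ) ^ x * y) := by
  intro x y hx hy
  have hL : 0 < logb 2 3 := by linarith [one_le_logb_two_three]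
  have hy1 : 1 ≤ y := (one_le_rpow one_le_two (mul_nonneg (div_nonneg
    (sub_nonneg.2 one_le_logb_two_three) zero_le_two) (by linarith))).trans hy
  have hs : (logb 2 3 - 1) * x ≤ 2 * logb 2 y := by
    linarith [(le_logb_iff_rpow_le one_lt_two (by linarith)).2 hy]
  have hs0 : 0 ≤ logb 2 y := logb_nonneg one_lt_two hy1
  unfold f
  rw [rpow_two_mul_logb_three_add_one two_pos (by norm_num) (by positivity),
    rpow_two_mul_logb_three_add_one two_pos (by norm_num) (by positivity), ← rpow_add two_pos]
  apply rpow_le_rpow_of_exponent_le one_le_two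
  calc 2 * x ^ 2 + x + 1 + fExponent (logb 2 3) (logb 2 (2 * y + 1))
      ≤ 2 * x ^ 2 + x + 1 + fExponent (logb 2 3) (logb 2 3 + logb 2 y) := by
        gcongr
        exact fExponent_le_fExponent hL (logb_nonneg one_lt_two (by linarith))
          (logb_two_mul_add_one_le one_lt_two hy1)
    _ ≤ fExponent (logb 2 3) (x + 1 + logb 2 y) :=
        add_fExponent_le_fExponent hL logb_two_three_le hx hs
    _ ≤ fExponent (logb 2 3) (logb 2 (2 * (2 ^ x * y) + 1)) :=
        fExponent_le_fExponent hL (by linarith) (add_one_add_logb_two_le (by linarith))
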